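/- arXiv:1110.0189 — 2 statements merged into one kernel-verified Lean document; each statement's English description precedes it below -/
import Mathlib

section
/- For every binary word ω and every m ≥ 1, Γ(ω 2^m) = Γ(ω) 2^m, where Γ is the extended Steingrímsson map on binary words. -/
/-- Count the leading letters of a list equal to `a`; return the count and the rest. -/
def leadCount (a : ℕ) : List ℕ → ℕ × List ℕ
  | [] => (0, [])
  | b :: rest =>
    if b = a then
      let p := leadCount a rest
      (p.1 + 1, p.2)
    else (0, b :: rest)

def blocksAux : ℕ → List ℕ → List (ℕ × ℕ)
  | 0, _ => []
  | _, [] => []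
  | fuel + 1, w =>
    let p := leadCount 1 w
    let q := leadCount 2 p.2
    (p.1, q.1) :: blocksAux fuel q.2

/-- The descent-block decomposition `[(m₀,n₀),…,(m_d,n_d)]` of a binary word
`1^{m₀} 2^{n₀} ⋯ 1^{m_d} 2^{n_d}`. -/
def blocks (w : List ℕ) : List (ℕ × ℕ) := blocksAux w.length w

/-- The word `1^{m₀} 2^{n₀} ⋯ 1^{m_d} 2^{n_d}` determined by blocks. -/
def blockWord (bs : List (ℕ × ℕ)) : List ℕ :=
  bs.flatMap fun p => List.replicate p.1 1 ++ List.replicate p.2 2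

/-- `[(m₀,n₀),…,(m_d,n_d)]` is a valid descent-block decomposition:
`m_i > 0` for `1 ≤ i ≤ d` and `n_j > 0` for `0 ≤ j ≤ d-1`. -/
def ValidBlocks (bs : List (ℕ × ℕ)) : Prop :=
  bs ≠ [] ∧ (∀ p ∈ bs.tail, 0 < p.1) ∧ (∀ p ∈ bs.dropLast, 0 < p.2)

/-- A word on the alphabet {1,2}. -/
def IsBinary (w : List ℕ) : Prop := ∀ a ∈ w, a = 1 ∨ a = 2

/-- The descent number of a word. -/
def des (w : List ℕ) : ℕ := (w.zip w.tail).countP fun p => decide (p.2 < p.1)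

/-- The excedance number of a binary word with `k` ones: the number of
positions `i ≤ k` carrying the letter 2. -/
def exc (w : List ℕ) : ℕ := (w.take (w.count 1)).count 2

/-- `Ψ = Φ₁⁻¹` on binary words, via the descent-block decomposition. -/
def psiBlocks (bs : List (ℕ × ℕ)) : List ℕ :=
  List.replicate (bs.headD (0,0)).1 1
    ++ bs.tail.flatMap (fun p => 2 :: List.replicate (p.1 - 1) 1)
    ++ bs.dropLast.flatMap (fun p => List.replicate (p.2 - 1) 2 ++ [1])
    ++ List.replicate (bs.getLastD (0,0)).2 2

def Psi (w : List ℕ) : List ℕ := psiBlocks (blocks w)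

/-- Foata's second fundamental transformation on binary words. -/
def phi2Blocks (bs : List (ℕ × ℕ)) : List ℕ :=
  bs.tail.reverse.flatMap (fun p => List.replicate (p.1 - 1) 1 ++ [2])
    ++ List.replicate (bs.headD (0,0)).1 1
    ++ bs.dropLast.flatMap (fun p => List.replicate (p.2 - 1) 2 ++ [1])
    ++ List.replicate (bs.getLastD (0,0)).2 2

def Phi2 (w : List ℕ) : List ℕ := phi2Blocks (blocks w)

/-- The extended Steingrímsson map `Γ` on binary words. -/
def gammaBlocks (bs : List (ℕ × ℕ)) : List ℕ :=
  match bs with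
  | [] => []
  | [(m0, n0)] => List.replicate m0 1 ++ List.replicate n0 2
  | (m0, n0) :: rest =>
      List.replicate m0 1
        ++ rest.dropLast.flatMap (fun p => 2 :: List.replicate (p.1 - 1) 1)
        ++ (2 :: List.replicate (rest.getLastD (0,0)).1 1)
        ++ (let ns := n0 :: rest.map Prod.snd
            ns.dropLast.dropLast.flatMap (fun nj => List.replicate (nj - 1) 2 ++ [1])
              ++ List.replicate (ns.dropLast.getLastD 0 - 1 + ns.getLastD 0) 2)

def Gamma (w : List ℕ) : List ℕ := gammaBlocks (blocks w)

/-- The involution `φ` on binary words. -/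
def phi (w : List ℕ) : List ℕ :=
  let bs := blocks w
  let ns := bs.map Prod.snd
  let newms : List ℕ :=
    match (bs.map Prod.fst).reverse with
    | [] => []
    | [a] => [a]
    | a :: rest => (a - 1) :: (rest.dropLast ++ [rest.getLastD 0 + 1])
  blockWord (newms.zip ns)

/-- Fibonacci words: binary words with no two consecutive ones. -/
def IsFib (w : List ℕ) : Prop :=
  IsBinary w ∧ w.Chain' fun a b => ¬(a = 1 ∧ b = 1)

def FibSet (n : ℕ) : Set (List ℕ) := {w | IsFib w ∧ w.length = n}

/-- Fibonacci words of length `n` ending with the letter 1. -/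
def FibSet' (n : ℕ) : Set (List ℕ) :=
  {w | IsFib w ∧ w.length = n ∧ w.getLast? = some 1}

/-- Binary words of length `n` with no two consecutive twos. -/
def GSet (n : ℕ) : Set (List ℕ) :=
  {w | IsBinary w ∧ w.length = n ∧ w.Chain' fun a b => ¬(a = 2 ∧ b = 2)}

/-- The word `1^{m₀} 2^{d+n₀-1} 1 2^{n₁-1} ⋯ 1 2^{n_{d-1}-1} 1 2^{n_d}`. -/
def Rword (m0 : ℕ) (ns : List ℕ) : List ℕ :=
  match ns with
  | [] => List.replicate m0 1
  | [n0] => List.replicate m0 1 ++ List.replicate n0 2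
  | n0 :: rest =>
      List.replicate m0 1 ++ List.replicate (rest.length + n0 - 1) 2
        ++ rest.dropLast.flatMap (fun nj => 1 :: List.replicate (nj - 1) 2)
        ++ (1 :: List.replicate (rest.getLastD 0) 2)

def RSet (n : ℕ) : Set (List ℕ) :=
  {w | ∃ m0 ns, m0 ≤ 1 ∧ ns ≠ [] ∧ (∀ j ∈ List.dropLast ns, 1 ≤ j) ∧
        w = Rword m0 ns ∧ w.length = n}

/-- The Fibonacci word `1^{m₀} 2^{n₀} 1 2^{n₁} ⋯ 1 2^{n_d}`. -/
def Fword (m0 : ℕ) (ns : List ℕ) : List ℕ :=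
  List.replicate m0 1 ++ List.replicate (ns.headD 0) 2
    ++ ns.tail.flatMap fun nj => 1 :: List.replicate nj 2

/-!
Appending `2^m` to a nonempty binary word only lengthens its final run of twos, so its
descent-block decomposition changes only in the last block, `n_d ↦ n_d + m`. In the formula
for `Γ` the exponent `n_d` occurs only in the final run `2^{n_{d-1}-1+n_d}`, which therefore
grows by `m`. The empty word is reduced to the word `2`.
-/

lemma leadCount_decomp (a : ℕ) (w : List ℕ) :
    w = List.replicate (leadCount a w).1 a ++ (leadCount a w).2 := by
  induction w with
  | nil => rfl
  | cons b t ih =>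
    by_cases hb : b = a
    · subst hb
      simp only [leadCount, if_pos]
      exact congrArg _ ih
    · simp [leadCount, hb]

lemma leadCount_snd_suffix (a : ℕ) (w : List ℕ) : (leadCount a w).2 <:+ w :=
  ⟨_, (leadCount_decomp a w).symm⟩

lemma leadCount_snd_length_lt (a : ℕ) (t : List ℕ) :
    (leadCount a (a :: t)).2.length < (a :: t).length := by
  simpa [leadCount] using (leadCount_snd_suffix a t).length_le

lemma leadCount_replicate (a m : ℕ) : leadCount a (List.replicate m a) = (m, []) := by
  induction m with
  | zero => rfl
  | succ k ih => simp [List.replicate_succ, leadCount, ih]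

lemma leadCount_append (a : ℕ) (x y : List ℕ) : leadCount a (x ++ y) =
    if (leadCount a x).2 = [] then ((leadCount a x).1 + (leadCount a y).1, (leadCount a y).2)
    else ((leadCount a x).1, (leadCount a x).2 ++ y) := by
  induction x with
  | nil => simp [leadCount]
  | cons b x ih =>
    by_cases hb : b = a
    · subst hb
      by_cases hx : (leadCount b x).2 = [] <;> simp [leadCount, ih, hx, Nat.add_right_comm]
    · simp [leadCount, hb]

lemma leadCount_append_of_fst_eq_zero (a : ℕ) (x : List ℕ) {y : List ℕ}
    (hy : (leadCount a y).1 = 0) :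
    leadCount a (x ++ y) = ((leadCount a x).1, (leadCount a x).2 ++ y) := by
  have hy' : (leadCount a y).2 = y := by simpa [hy] using (leadCount_decomp a y).symm
  rw [leadCount_append]
  split_ifs with hx <;> simp [hx, hy, hy']

lemma blocksAux_nil (n : ℕ) : blocksAux n [] = [] := by
  cases n <;> rfl

lemma blocksAux_succ_of_ne_nil (n : ℕ) {w : List ℕ} (hw : w ≠ []) :
    blocksAux (n + 1) w =
      ((leadCount 1 w).1, (leadCount 2 (leadCount 1 w).2).1)
        :: blocksAux n (leadCount 2 (leadCount 1 w).2).2 := by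
  cases w with
  | nil => exact absurd rfl hw
  | cons b t => rfl

lemma blocksAux_ne_nil {n : ℕ} {w : List ℕ} (hn : n ≠ 0) (hw : w ≠ []) : blocksAux n w ≠ [] := by
  obtain ⟨k, rfl⟩ := Nat.exists_eq_succ_of_ne_zero hn
  simp [blocksAux_succ_of_ne_nil k hw]

lemma isBinary_leadCount_two_leadCount_one {w : List ℕ} (hw : IsBinary w) :
    IsBinary (leadCount 2 (leadCount 1 w).2).2 :=
  fun a ha => hw a (((leadCount_snd_suffix 2 _).trans (leadCount_snd_suffix 1 w)).subset ha)

lemma length_leadCount_two_leadCount_one_lt {w : List ℕ} (hw : IsBinary w) (hne : w ≠ []) :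
    (leadCount 2 (leadCount 1 w).2).2.length < w.length := by
  obtain ⟨b, t, rfl⟩ := List.exists_cons_of_ne_nil hne
  have hsuf := (leadCount_snd_suffix 2 (leadCount 1 (b :: t)).2).length_le
  rcases hw b List.mem_cons_self with rfl | rfl
  · have := leadCount_snd_length_lt 1 t
    omega
  · exact leadCount_snd_length_lt 2 t

lemma blocksAux_append_replicate_two (m : ℕ) :
    ∀ (fuel : ℕ) (w : List ℕ), IsBinary w → w ≠ [] → w.length ≤ fuel →
      blocksAux (fuel + m) (w ++ List.replicate m 2) =
        (blocksAux fuel w).modifyLast (Prod.map id (· + m))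
  | 0, _, _, hne, hlen => absurd (List.length_eq_zero_iff.mp (Nat.le_zero.mp hlen)) hne
  | f + 1, w, hw, hne, hlen => by
    have hlead : leadCount 1 (w ++ List.replicate m 2) =
        ((leadCount 1 w).1, (leadCount 1 w).2 ++ List.replicate m 2) :=
      leadCount_append_of_fst_eq_zero 1 w (by cases m <;> rfl)
    rw [Nat.add_right_comm, blocksAux_succ_of_ne_nil _ (by simp [hne]),
      blocksAux_succ_of_ne_nil _ hne, hlead, leadCount_append, leadCount_replicate]
    have hrest := length_leadCount_two_leadCount_one_lt hw hne
    by_cases hv : (leadCount 2 (leadCount 1 w).2).2 = []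
    · simp [hv, blocksAux_nil, List.modifyLast, List.modifyLast.go]
    · have hf : (leadCount 2 (leadCount 1 w).2).2.length ≤ f := by omega
      have hf0 : f ≠ 0 := by have := List.length_pos_of_ne_nil hv; omega
      rw [if_neg hv, blocksAux_append_replicate_two m f _ (isBinary_leadCount_two_leadCount_one hw) hv hf]
      exact (List.modifyLast_append_of_right_ne_nil _ [_] _ (blocksAux_ne_nil hf0 hv)).symm

lemma blocks_ne_nil {w : List ℕ} (hw : w ≠ []) : blocks w ≠ [] :=
  blocksAux_ne_nil (List.length_pos_of_ne_nil hw).ne' hw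

lemma blocks_append_replicate_two {w : List ℕ} (hw : IsBinary w) (hne : w ≠ []) (m : ℕ) :
    blocks (w ++ List.replicate m 2) = (blocks w).modifyLast (Prod.map id (· + m)) := by
  rw [blocks, blocks, List.length_append, List.length_replicate]
  exact blocksAux_append_replicate_two m _ w hw hne le_rfl

lemma gammaBlocks_cons_of_ne_nil (p : ℕ × ℕ) {r : List (ℕ × ℕ)} (hr : r ≠ []) :
    gammaBlocks (p :: r) =
      List.replicate p.1 1
        ++ r.dropLast.flatMap (fun q => 2 :: List.replicate (q.1 - 1) 1)
        ++ (2 :: List.replicate (r.getLastD (0,0)).1 1)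
        ++ (let ns := p.2 :: r.map Prod.snd
            ns.dropLast.dropLast.flatMap (fun nj => List.replicate (nj - 1) 2 ++ [1])
              ++ List.replicate (ns.dropLast.getLastD 0 - 1 + ns.getLastD 0) 2) := by
  obtain ⟨q, s, rfl⟩ := List.exists_cons_of_ne_nil hr
  rfl

lemma gammaBlocks_concat_add (l : List (ℕ × ℕ)) (a b m : ℕ) :
    gammaBlocks (l ++ [(a, b + m)]) = gammaBlocks (l ++ [(a, b)]) ++ List.replicate m 2 := by
  cases l with
  | nil => simp [gammaBlocks, Nat.add_comm b m]
  | cons p r =>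
    simp only [List.cons_append, gammaBlocks_cons_of_ne_nil p (List.concat_ne_nil _ _),
      List.map_append, List.map_cons, List.map_nil, List.dropLast_concat, List.getLastD_concat]
    simp only [← List.cons_append, List.dropLast_concat, List.getLastD_concat, List.replicate_add,
      List.append_assoc]

lemma gammaBlocks_modifyLast_add_snd {bs : List (ℕ × ℕ)} (hbs : bs ≠ []) (m : ℕ) :
    gammaBlocks (bs.modifyLast (Prod.map id (· + m))) = gammaBlocks bs ++ List.replicate m 2 := by
  obtain ⟨l, ⟨a, b⟩, rfl⟩ := (List.eq_nil_or_concat' bs).resolve_left hbs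
  rw [List.modifyLast_concat]
  exact gammaBlocks_concat_add l a b m

lemma Gamma_append_replicate_two_of_ne_nil {w : List ℕ} (hw : IsBinary w) (hne : w ≠ []) (m : ℕ) :
    Gamma (w ++ List.replicate m 2) = Gamma w ++ List.replicate m 2 := by
  rw [Gamma, Gamma, blocks_append_replicate_two hw hne,
    gammaBlocks_modifyLast_add_snd (blocks_ne_nil hne)]

theorem stmt_18_general (w : List ℕ) (hw : IsBinary w) (m : ℕ) :
    Gamma (w ++ List.replicate m 2) = Gamma w ++ List.replicate m 2 := by
  rcases eq_or_ne w [] with rfl | hne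
  · cases m with
    | zero => rfl
    | succ k =>
      rw [List.replicate_succ]
      exact Gamma_append_replicate_two_of_ne_nil (w := [2]) (by simp [IsBinary]) (by simp) k
  · exact Gamma_append_replicate_two_of_ne_nil hw hne m

theorem stmt_18 (w : List ℕ) (hw : IsBinary w) (m : ℕ) (hm : 1 ≤ m) :
    Gamma (w ++ List.replicate m 2) = Gamma w ++ List.replicate m 2 :=
  stmt_18_general w hw m
end

section
/- Let ω be a binary word of length n with k ones, write Γ(ω) = b_1⋯b_n, let t be the largest i such that ω ends with 2^i, and set U = b_1⋯b_k and V = b_{k+1}⋯b_{n−t}. Then for every m ≥ 1: if t = 0 then Γ(ω 1^m) = U 1^m V, and if t > 0 then Γ(ω 1^m) = U 2 1^{m−1} V 1 2^{t−1}. -/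
/-!
Write `ω = 1^{m₀} 2^{n₀} ⋯ 1^{m_d} 2^{n_d}` in descent blocks (`m_i > 0` for `i ≥ 1`,
`n_j > 0` for `j < d`). Moving every letter `1` of the second half of `Γ(ω)` in front of the run
of `2`s preceding it gives `Γ(ω) = U V 2^{n_d}` with
`U = 1^{m₀} 2 1^{m₁-1} ⋯ 2 1^{m_d-1}` and `V = 1 2^{n₀-1} ⋯ 1 2^{n_{d-1}-1}`,
so `|U| = ∑ mᵢ` is the number of ones of `ω`, and `t = n_d`. Appending `1^m` either lengthens
the last block (`t = 0`), which appends `1^m` to `U` and leaves `V` alone, or creates the new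
block `(m, 0)` (`t > 0`), which appends `2 1^{m-1}` to `U` and `1 2^{t-1}` to `V`.
-/

open List

lemma blockWord_cons (p : ℕ × ℕ) (bs : List (ℕ × ℕ)) :
    blockWord (p :: bs) = replicate p.1 1 ++ (replicate p.2 2 ++ blockWord bs) := by
  simp [blockWord]

lemma count_one_blockWord (bs : List (ℕ × ℕ)) :
    (blockWord bs).count 1 = (bs.map Prod.fst).sum := by
  induction bs with
  | nil => rfl
  | cons p bs ih => simp [blockWord_cons, count_replicate, ih]

lemma length_blockWord (bs : List (ℕ × ℕ)) :
    (blockWord bs).length = (bs.map Prod.fst).sum + (bs.map Prod.snd).sum := by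
  induction bs with
  | nil => rfl
  | cons p bs ih =>
    simp only [blockWord_cons, length_append, length_replicate, ih, map_cons, sum_cons]
    omega

lemma ValidBlocks.of_cons {p : ℕ × ℕ} {bs : List (ℕ × ℕ)} (h : ValidBlocks (p :: bs))
    (hbs : bs ≠ []) : ValidBlocks bs := by
  obtain ⟨-, hm, hn⟩ := h
  refine ⟨hbs, fun q hq => hm q (mem_of_mem_tail hq), fun q hq => hn q ?_⟩
  rw [dropLast_cons_of_ne_nil hbs]
  exact mem_cons_of_mem _ hq

lemma ValidBlocks.concat_of_le {init : List (ℕ × ℕ)} {a b a' b' : ℕ}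
    (h : ValidBlocks (init ++ [(a, b)])) (ha : a ≤ a') : ValidBlocks (init ++ [(a', b')]) := by
  obtain ⟨-, hm, hn⟩ := h
  refine ⟨by simp, ?_, by simpa using hn⟩
  cases init with
  | nil => simp
  | cons q init =>
    simp only [cons_append, tail_cons, mem_append, mem_singleton] at hm ⊢
    rintro p (hp | rfl)
    · exact hm p (.inl hp)
    · exact (hm _ (.inr rfl)).trans_le ha

lemma ValidBlocks.concat_concat {init : List (ℕ × ℕ)} {a b c d : ℕ}
    (h : ValidBlocks (init ++ [(a, b)])) (hb : 0 < b) (hc : 0 < c) :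
    ValidBlocks (init ++ [(a, b)] ++ [(c, d)]) := by
  obtain ⟨-, hm, hn⟩ := h
  refine ⟨by simp, ?_, ?_⟩
  · simp only [append_assoc, singleton_append]
    cases init with
    | nil => simpa using hc
    | cons q init =>
      simp only [cons_append, tail_cons, mem_append, mem_cons, not_mem_nil, or_false] at hm ⊢
      rintro p (hp | rfl | rfl)
      · exact hm p (.inl hp)
      · exact hm _ (.inr rfl)
      · exact hc
  · simp only [dropLast_concat, mem_append, mem_singleton] at hn ⊢
    rintro p (hp | rfl)
    · exact hn p hp
    · exact hb

lemma ValidBlocks.concat_eq_nil_or_pos {init : List (ℕ × ℕ)} {a b : ℕ}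
    (hv : ValidBlocks (init ++ [(a, b)])) : init = [] ∨ 0 < a := by
  cases init with
  | nil => exact .inl rfl
  | cons q init => exact .inr (hv.2.1 (a, b) (by simp))

lemma IsBinary.exists_validBlocks {w : List ℕ} (hw : IsBinary w) :
    ∃ bs, ValidBlocks bs ∧ blockWord bs = w := by
  induction w using List.reverseRecOn with
  | nil => exact ⟨[(0, 0)], ⟨by simp, by simp, by simp⟩, rfl⟩
  | append_singleton w x ih =>
    obtain ⟨bs, hv, rfl⟩ := ih fun a ha => hw a (mem_append_left _ ha)
    obtain ⟨init, ⟨a, b⟩, rfl⟩ : ∃ init p, bs = init ++ [p] := by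
      simpa using (eq_nil_or_concat bs).resolve_left hv.1
    rcases hw x (by simp) with rfl | rfl
    · rcases Nat.eq_zero_or_pos b with rfl | hb
      · refine ⟨init ++ [(a + 1, 0)], hv.concat_of_le (Nat.le_succ a), ?_⟩
        simp [blockWord, replicate_succ']
      · refine ⟨init ++ [(a, b)] ++ [(1, 0)], hv.concat_concat hb Nat.one_pos, ?_⟩
        simp [blockWord]
    · refine ⟨init ++ [(a, b + 1)], hv.concat_of_le le_rfl, ?_⟩
      simp [blockWord, replicate_succ']

lemma leadCount_replicate_append (a k : ℕ) {r : List ℕ} (hr : r.head? ≠ some a) :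
    leadCount a (replicate k a ++ r) = (k, r) := by
  induction k with
  | zero =>
    cases r with
    | nil => rfl
    | cons b r => simpa [leadCount] using hr
  | succ k ih => simp [replicate_succ, leadCount, ih]

lemma blocksAux_blockWord {bs : List (ℕ × ℕ)} (hv : ValidBlocks bs) (hne : blockWord bs ≠ [])
    {fuel : ℕ} (hfuel : (blockWord bs).length ≤ fuel) : blocksAux fuel (blockWord bs) = bs := by
  induction bs generalizing fuel with
  | nil => exact absurd rfl hv.1
  | cons p rest ih =>
    obtain ⟨f, rfl⟩ : ∃ f, fuel = f + 1 :=
      Nat.exists_eq_add_one.2 ((length_pos_iff.2 hne).trans_le hfuel)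
    have hrest : (blockWord rest).head? ≠ some 2 := by
      cases rest with
      | nil => simp [blockWord]
      | cons q rest =>
        obtain ⟨k, hk⟩ := Nat.exists_eq_add_one.2 (hv.2.1 q (by simp))
        simp [blockWord_cons, hk, replicate_succ]
    have hmid : (replicate p.2 2 ++ blockWord rest).head? ≠ some 1 := by
      rcases Nat.eq_zero_or_pos p.2 with h0 | hpos
      · cases rest with
        | nil => simp [blockWord, h0]
        | cons q rest => exact absurd (hv.2.2 p (by simp)) (by omega)
      · obtain ⟨k, hk⟩ := Nat.exists_eq_add_one.2 hpos
        simp [hk, replicate_succ]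
    rw [blocksAux.eq_3 _ _ hne, blockWord_cons, leadCount_replicate_append 1 _ hmid,
      leadCount_replicate_append 2 _ hrest]
    congr
    rcases eq_or_ne rest [] with rfl | hr
    · cases f <;> rfl
    · refine ih (hv.of_cons hr) ?_ ?_
      · obtain ⟨q, rest, rfl⟩ := exists_cons_of_ne_nil hr
        obtain ⟨k, hk⟩ := Nat.exists_eq_add_one.2 (hv.2.1 q (by simp))
        simp [blockWord_cons, hk, replicate_succ]
      · have := hv.2.2 p (by simp [dropLast_cons_of_ne_nil hr])
        simp only [blockWord_cons, length_append, length_replicate] at hfuel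
        omega

lemma ValidBlocks.gamma_blockWord {bs : List (ℕ × ℕ)} (hv : ValidBlocks bs) :
    Gamma (blockWord bs) = gammaBlocks bs := by
  by_cases hne : blockWord bs = []
  · -- this is the case `bs = [(0, 0)]`, which `blocks` never returns
    obtain ⟨p, rest, rfl⟩ := exists_cons_of_ne_nil hv.1
    obtain rfl : rest = [] := by
      by_contra hr
      have := hv.2.2 p (by simp [dropLast_cons_of_ne_nil hr])
      simp only [blockWord_cons, append_eq_nil_iff, replicate_eq_nil_iff] at hne
      omega
    obtain ⟨a, b⟩ := p
    obtain ⟨rfl, rfl⟩ : a = 0 ∧ b = 0 := by simpa [blockWord] using hne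
    rfl
  · rw [Gamma, blocks, blocksAux_blockWord hv hne le_rfl]

lemma flatMap_concat_cons {α β : Type*} (f : α → List β) (x : β) (l : List α) (a : α) :
    (l ++ [a]).flatMap (fun y => x :: f y) =
      x :: (l.flatMap (fun y => f y ++ [x]) ++ f a) := by
  induction l with
  | nil => simp
  | cons y l ih => simp [ih]

def gammaU (bs : List (ℕ × ℕ)) : List ℕ :=
  replicate (bs.headD (0, 0)).1 1 ++ bs.tail.flatMap fun p => 2 :: replicate (p.1 - 1) 1

def gammaV (bs : List (ℕ × ℕ)) : List ℕ :=
  bs.dropLast.flatMap fun p => 1 :: replicate (p.2 - 1) 2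

lemma gammaBlocks_eq_gammaU_append_gammaV {bs : List (ℕ × ℕ)}
    (hm : ∀ p ∈ bs.tail, 0 < p.1) :
    gammaBlocks bs = gammaU bs ++ gammaV bs ++ replicate (bs.getLastD (0, 0)).2 2 := by
  match bs, hm with
  | [], _ => rfl
  | [(a, b)], _ => simp [gammaBlocks, gammaU, gammaV]
  | (a, b) :: q :: rest, hm =>
    obtain ⟨init, ⟨c, d⟩, hinit⟩ : ∃ init p, q :: rest = init ++ [p] := by
      simpa using (eq_nil_or_concat (q :: rest)).resolve_left (cons_ne_nil _ _)
    obtain ⟨init', ⟨e, f⟩, hinit'⟩ : ∃ init' p, (a, b) :: init = init' ++ [p] := by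
      simpa using (eq_nil_or_concat ((a, b) :: init)).resolve_left (cons_ne_nil _ _)
    have hc : 0 < c := hm (c, d) (by simp [hinit])
    have hns : b :: init.map Prod.snd = init'.map Prod.snd ++ [f] := by
      simpa using congrArg (map Prod.snd) hinit'
    have hV : ((a, b) :: init).flatMap (fun p => 1 :: replicate (p.2 - 1) 2) =
        1 :: (init'.flatMap (fun p => replicate (p.2 - 1) 2 ++ [1]) ++
          replicate (f - 1) 2) := by
      rw [hinit', flatMap_concat_cons]
    have hc1 : replicate c 1 = replicate (c - 1) 1 ++ [1] := by
      rw [← replicate_succ', Nat.sub_add_cancel hc]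
    simp only [gammaBlocks, gammaU, gammaV]
    rw [hinit, dropLast_concat, getLastD_concat, map_append, map_singleton, ← cons_append,
      dropLast_concat, hns, dropLast_concat, getLastD_concat, getLastD_concat, ← cons_append,
      dropLast_concat, hV, hc1]
    simp [flatMap_map, getLast?_cons]

lemma gammaU_concat {bs : List (ℕ × ℕ)} (hbs : bs ≠ []) (p : ℕ × ℕ) :
    gammaU (bs ++ [p]) = gammaU bs ++ 2 :: replicate (p.1 - 1) 1 := by
  obtain ⟨q, bs, rfl⟩ := exists_cons_of_ne_nil hbs
  simp [gammaU]

lemma gammaU_concat_add {init : List (ℕ × ℕ)} {a : ℕ} (ha : init = [] ∨ 0 < a)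
    (b b' m : ℕ) :
    gammaU (init ++ [(a + m, b')]) = gammaU (init ++ [(a, b)]) ++ replicate m 1 := by
  cases init with
  | nil => simp [gammaU]
  | cons q init =>
    have ha : 0 < a := ha.resolve_left (cons_ne_nil q init)
    simp [gammaU, show a + m - 1 = a - 1 + m by omega]

lemma gammaV_concat (init : List (ℕ × ℕ)) (p p' : ℕ × ℕ) :
    gammaV (init ++ [p']) = gammaV (init ++ [p]) := by
  simp [gammaV]

lemma gammaV_concat_concat (init : List (ℕ × ℕ)) (p q : ℕ × ℕ) :
    gammaV (init ++ [p] ++ [q]) = gammaV (init ++ [p]) ++ 1 :: replicate (p.2 - 1) 2 := by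
  simp [gammaV]

lemma length_gammaU {bs : List (ℕ × ℕ)} (hm : ∀ p ∈ bs.tail, 0 < p.1) :
    (gammaU bs).length = (bs.map Prod.fst).sum := by
  cases bs with
  | nil => rfl
  | cons p bs =>
    simp only [gammaU, headD_cons, tail_cons, length_append, length_replicate, length_flatMap,
      length_cons, map_cons, sum_cons] at hm ⊢
    rw [map_congr_left fun q hq => Nat.sub_add_cancel (hm q hq)]

lemma length_gammaV {bs : List (ℕ × ℕ)} (hn : ∀ p ∈ bs.dropLast, 0 < p.2) :
    (gammaV bs).length = (bs.dropLast.map Prod.snd).sum := by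
  simp only [gammaV, length_flatMap, length_cons, length_replicate]
  exact congrArg sum (map_congr_left fun q hq => Nat.sub_add_cancel (hn q hq))

lemma ValidBlocks.gamma_blockWord_concat {init : List (ℕ × ℕ)} {a b : ℕ}
    (hv : ValidBlocks (init ++ [(a, b)])) :
    Gamma (blockWord (init ++ [(a, b)])) =
      gammaU (init ++ [(a, b)]) ++ gammaV (init ++ [(a, b)]) ++ replicate b 2 := by
  rw [hv.gamma_blockWord, gammaBlocks_eq_gammaU_append_gammaV hv.2.1, getLastD_concat]

lemma ValidBlocks.length_gammaU_eq_count {bs : List (ℕ × ℕ)} (hv : ValidBlocks bs) :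
    (gammaU bs).length = (blockWord bs).count 1 := by
  rw [length_gammaU hv.2.1, count_one_blockWord]

lemma ValidBlocks.length_gammaU_append_gammaV {init : List (ℕ × ℕ)} {a b : ℕ}
    (hv : ValidBlocks (init ++ [(a, b)])) :
    (gammaU (init ++ [(a, b)]) ++ gammaV (init ++ [(a, b)])).length =
      (blockWord (init ++ [(a, b)])).length - b := by
  rw [length_append, length_gammaU hv.2.1, length_gammaV hv.2.2, length_blockWord]
  simp only [dropLast_concat, map_append, sum_append, map_singleton, sum_singleton]
  omega

lemma replicate_suffix_append_replicate_iff {α : Type*} {u : List α} {x : α} (hu : ¬ [x] <:+ u)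
    {k n : ℕ} : replicate k x <:+ u ++ replicate n x ↔ k ≤ n := by
  refine ⟨fun h => ?_, fun h => suffix_append_of_suffix (suffix_replicate_iff.2 (by simpa))⟩
  by_contra! hnk
  have : [x] ++ replicate n x <:+ u ++ replicate n x :=
    (suffix_replicate_iff.2 (by simpa [replicate_succ])).trans h
  exact hu (suffix_append_self_iff.1 this)

lemma ValidBlocks.not_suffix_two {init : List (ℕ × ℕ)} {a b : ℕ}
    (hv : ValidBlocks (init ++ [(a, b)])) : ¬ [2] <:+ blockWord init ++ replicate a 1 := by
  rcases hv.concat_eq_nil_or_pos with rfl | ha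
  · simp [blockWord, suffix_replicate_iff]
  · obtain ⟨k, rfl⟩ := Nat.exists_eq_add_one.2 ha
    rw [replicate_succ', ← append_assoc, singleton_suffix_append_singleton_iff]
    decide

theorem stmt_19 (w : List ℕ) (hw : IsBinary w) (t : ℕ)
    (ht : List.replicate t 2 <:+ w) (ht' : ¬ List.replicate (t + 1) 2 <:+ w)
    (m : ℕ) (hm : 1 ≤ m) :
    (t = 0 →
      Gamma (w ++ List.replicate m 1) =
        (Gamma w).take (w.count 1) ++ List.replicate m 1 ++
          (Gamma w).drop (w.count 1)) ∧
    (0 < t →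
      Gamma (w ++ List.replicate m 1) =
        (Gamma w).take (w.count 1) ++ [2] ++ List.replicate (m - 1) 1 ++
          ((Gamma w).take (w.length - t)).drop (w.count 1) ++ [1] ++
          List.replicate (t - 1) 2) := by
  obtain ⟨bs, hv, rfl⟩ := hw.exists_validBlocks
  obtain ⟨init, ⟨a, b⟩, rfl⟩ : ∃ init p, bs = init ++ [p] := by
    simpa using (eq_nil_or_concat bs).resolve_left hv.1
  obtain rfl : t = b := by
    have hw_eq : blockWord (init ++ [(a, b)]) =
        (blockWord init ++ replicate a 1) ++ replicate b 2 := by simp [blockWord]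
    rw [hw_eq, replicate_suffix_append_replicate_iff hv.not_suffix_two] at ht ht'
    omega
  rw [hv.gamma_blockWord_concat, ← hv.length_gammaU_eq_count,
    ← hv.length_gammaU_append_gammaV, take_left, drop_left]
  simp only [append_assoc, take_left, drop_left]
  refine ⟨fun ht0 => ?_, fun htpos => ?_⟩
  · subst ht0
    have hword : blockWord (init ++ [(a, 0)]) ++ replicate m 1 =
        blockWord (init ++ [(a + m, 0)]) := by simp [blockWord]
    rw [hword, (hv.concat_of_le (Nat.le_add_right a m)).gamma_blockWord_concat,
      gammaU_concat_add hv.concat_eq_nil_or_pos 0 0 m, gammaV_concat init (a, 0)]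
    simp
  · have hword : blockWord (init ++ [(a, t)]) ++ replicate m 1 =
        blockWord (init ++ [(a, t)] ++ [(m, 0)]) := by simp [blockWord]
    rw [hword, (hv.concat_concat htpos hm).gamma_blockWord_concat, gammaU_concat (by simp),
      gammaV_concat_concat]
    simp
end
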